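/- arXiv:1111.3091 — 4 statements merged into one kernel-verified Lean document; each statement's English description precedes it below -/
import Mathlib

section
/- Let H be the 2n×2n block matrix [[A, A],[B, B]] where A and B are n×n integer matrices, and let I_{2n}, I_n denote identity matrices. Then the quotient group Z^{2n}/(H - I_{2n})Z^{2n} is isomorphic to Z^n/(A + B - I_n)Z^n. -/
/-- For `H = [[A,A],[B,B]]`, the quotient `ℤ^{2n}/(H - I)ℤ^{2n}` is
isomorphic to `ℤ^n/(A + B - I)ℤ^n`. -/
theorem stmt_0 (n : ℕ) (A B : Matrix (Fin n) (Fin n) ℤ) :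
    Nonempty
      ((((Fin n ⊕ Fin n) → ℤ) ⧸
          LinearMap.range (Matrix.mulVecLin (Matrix.fromBlocks A A B B - 1))) ≃ₗ[ℤ]
        ((Fin n → ℤ) ⧸ LinearMap.range (Matrix.mulVecLin (A + B - 1)))) := by
  classical
  let s : ((Fin n ⊕ Fin n) → ℤ) →ₗ[ℤ] (Fin n → ℤ) :=
    LinearMap.funLeft ℤ ℤ Sum.inl + LinearMap.funLeft ℤ ℤ Sum.inr
  have hs : ∀ x, s x = x ∘ Sum.inl + x ∘ Sum.inr := fun x => rfl
  let π := (LinearMap.range (Matrix.mulVecLin (A + B - 1))).mkQ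
  let f := π.comp s
  have hsurj : Function.Surjective f := by
    intro z
    obtain ⟨y, rfl⟩ := Submodule.mkQ_surjective _ z
    refine ⟨Sum.elim y 0, ?_⟩
    show π (s (Sum.elim y 0)) = π y
    congr 1
    rw [hs]
    funext i; simp
  have hker : LinearMap.ker f = LinearMap.range (Matrix.mulVecLin (Matrix.fromBlocks A A B B - 1)) := by
    ext x
    have : f x = π (s x) := rfl
    simp only [LinearMap.mem_ker, this, π, Submodule.mkQ_apply,
      Submodule.Quotient.mk_eq_zero, LinearMap.mem_range, Matrix.mulVecLin_apply]
    constructor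
    · rintro ⟨u, hu⟩
      rw [hs] at hu
      refine ⟨Sum.elim (A.mulVec u - x ∘ Sum.inl) (B.mulVec u - x ∘ Sum.inr), ?_⟩
      have hvw : (A.mulVec u - x ∘ Sum.inl) + (B.mulVec u - x ∘ Sum.inr) = u := by
        have : (A + B - 1).mulVec u = (A + B).mulVec u - u := by
          rw [Matrix.sub_mulVec, Matrix.one_mulVec]
        rw [this, Matrix.add_mulVec] at hu
        funext i
        have := congrFun hu i
        simp only [Pi.add_apply, Pi.sub_apply, Function.comp_apply] at this ⊢
        linarith
      rw [Matrix.sub_mulVec, Matrix.one_mulVec, Matrix.fromBlocks_mulVec]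
      funext j
      cases j with
      | inl i =>
        simp only [Pi.sub_apply, Sum.elim_inl, Sum.elim_comp_inl, Sum.elim_comp_inr,
          Pi.add_apply]
        have h1 : A.mulVec ((A.mulVec u - x ∘ Sum.inl) + (B.mulVec u - x ∘ Sum.inr)) = A.mulVec u := by
          rw [hvw]
        have := congrFun h1 i
        rw [Matrix.mulVec_add] at this
        simp only [Pi.add_apply, Pi.sub_apply, Function.comp_apply] at this ⊢
        linarith
      | inr i =>
        simp only [Pi.sub_apply, Sum.elim_inr, Sum.elim_comp_inl, Sum.elim_comp_inr,
          Pi.add_apply]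
        have h1 : B.mulVec ((A.mulVec u - x ∘ Sum.inl) + (B.mulVec u - x ∘ Sum.inr)) = B.mulVec u := by
          rw [hvw]
        have := congrFun h1 i
        rw [Matrix.mulVec_add] at this
        simp only [Pi.add_apply, Pi.sub_apply, Function.comp_apply] at this ⊢
        linarith
    · rintro ⟨y, rfl⟩
      refine ⟨y ∘ Sum.inl + y ∘ Sum.inr, ?_⟩
      rw [hs]
      simp only [Matrix.sub_mulVec, Matrix.one_mulVec, Matrix.fromBlocks_mulVec,
        Matrix.add_mulVec, Matrix.mulVec_add]
      funext i
      simp only [Pi.add_apply, Pi.sub_apply, Function.comp_apply, Sum.elim_inl, Sum.elim_inr]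
      ring
  exact ⟨(Submodule.quotEquivOfEq _ _ hker.symm).trans (f.quotKerEquivOfSurjective hsurj)⟩
end

section
/- Let Ĥ be the 2n×2n block matrix [[A, I_n],[B, 0]] where A, B are n×n integer matrices. Then Z^{2n}/(Ĥ - I_{2n})Z^{2n} is isomorphic to Z^n/(A + B - I_n)Z^n, via the surjective homomorphism Ψ : Z^{2n} → Z^n sending (x_1,...,x_n,y_1,...,y_n) to (x_1+y_1,...,x_n+y_n), which maps (Ĥ - I_{2n})Z^{2n} onto (A + B - I_n)Z^n. -/
/-- The homomorphism `Ψ : ℤ^{2n} → ℤ^n` adding the two halves of a vector. -/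
def psiAdd (n : ℕ) : ((Fin n ⊕ Fin n) → ℤ) →ₗ[ℤ] (Fin n → ℤ) where
  toFun v := fun i => v (Sum.inl i) + v (Sum.inr i)
  map_add' u v := by funext i; simp [Pi.add_apply]; ring
  map_smul' c v := by funext i; simp [Pi.smul_apply, smul_eq_mul]; ring

lemma psiAdd_apply (n : ℕ) (v : (Fin n ⊕ Fin n) → ℤ) (i : Fin n) :
    psiAdd n v i = v (Sum.inl i) + v (Sum.inr i) := rfl

lemma hhat_mulVec (n : ℕ) (A B : Matrix (Fin n) (Fin n) ℤ) (x y : Fin n → ℤ) :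
    (Matrix.fromBlocks A (1 : Matrix (Fin n) (Fin n) ℤ) B 0 - 1).mulVecLin (Sum.elim x y)
      = Sum.elim (A.mulVec x + y - x) (B.mulVec x - y) := by
  simp [Matrix.mulVecLin_apply, Matrix.sub_mulVec, Matrix.fromBlocks_mulVec,
    Matrix.one_mulVec]
  funext i
  cases i <;> simp [Sum.elim] <;> ring

lemma psi_key (n : ℕ) (A B : Matrix (Fin n) (Fin n) ℤ) (x y : Fin n → ℤ) :
    psiAdd n ((Matrix.fromBlocks A (1 : Matrix (Fin n) (Fin n) ℤ) B 0 - 1).mulVecLin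
      (Sum.elim x y)) = (A + B - 1).mulVecLin x := by
  rw [hhat_mulVec]
  funext i
  simp [psiAdd_apply, Matrix.mulVecLin_apply, Matrix.add_mulVec, Matrix.sub_mulVec,
    Matrix.one_mulVec]
  ring

/-- For `Ĥ = [[A, I],[B, 0]]`, the map `Ψ` is surjective, carries
`(Ĥ - I)ℤ^{2n}` onto `(A + B - I)ℤ^n`, and induces an isomorphism
`ℤ^{2n}/(Ĥ - I)ℤ^{2n} ≅ ℤ^n/(A + B - I)ℤ^n`. -/
theorem stmt_2 (n : ℕ) (A B : Matrix (Fin n) (Fin n) ℤ) :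
    Function.Surjective (psiAdd n) ∧
    Submodule.map (psiAdd n)
        (LinearMap.range (Matrix.mulVecLin (Matrix.fromBlocks A (1 : Matrix (Fin n) (Fin n) ℤ) B (0 : Matrix (Fin n) (Fin n) ℤ) - 1))) =
      LinearMap.range (Matrix.mulVecLin (A + B - 1)) ∧
    Nonempty
      ((((Fin n ⊕ Fin n) → ℤ) ⧸
          LinearMap.range (Matrix.mulVecLin (Matrix.fromBlocks A (1 : Matrix (Fin n) (Fin n) ℤ) B (0 : Matrix (Fin n) (Fin n) ℤ) - 1))) ≃ₗ[ℤ]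
        ((Fin n → ℤ) ⧸ LinearMap.range (Matrix.mulVecLin (A + B - 1)))) := by
  set Hm := Matrix.fromBlocks A (1 : Matrix (Fin n) (Fin n) ℤ) B (0 : Matrix (Fin n) (Fin n) ℤ) - 1 with hHm
  have hsurj : Function.Surjective (psiAdd n) := by
    intro w
    exact ⟨Sum.elim w 0, by funext i; simp [psiAdd_apply]⟩
  have hmap : Submodule.map (psiAdd n) (LinearMap.range Hm.mulVecLin)
      = LinearMap.range (Matrix.mulVecLin (A + B - 1)) := by
    apply le_antisymm
    · rintro _ ⟨_, ⟨v, rfl⟩, rfl⟩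
      refine ⟨fun i => v (Sum.inl i), ?_⟩
      rw [← psi_key n A B (fun i => v (Sum.inl i)) (fun i => v (Sum.inr i))]
      congr 1
      congr 1
      funext i; cases i <;> rfl
    · rintro _ ⟨x, rfl⟩
      exact ⟨Hm.mulVecLin (Sum.elim x 0), ⟨Sum.elim x 0, rfl⟩, psi_key n A B x 0⟩
  refine ⟨hsurj, hmap, ?_⟩
  -- lifted map
  set S := LinearMap.range Hm.mulVecLin
  set T := LinearMap.range (Matrix.mulVecLin (A + B - 1))
  have hle : S ≤ Submodule.comap (psiAdd n) T := by
    intro v hv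
    have : psiAdd n v ∈ T := by
      rw [← hmap]; exact ⟨v, hv, rfl⟩
    exact this
  let f := Submodule.mapQ S T (psiAdd n) hle
  have hfs : Function.Surjective f := by
    intro w
    obtain ⟨x, rfl⟩ := Submodule.mkQ_surjective T w
    obtain ⟨v, rfl⟩ := hsurj x
    exact ⟨Submodule.mkQ S v, rfl⟩
  have hfi : Function.Injective f := by
    rw [← LinearMap.ker_eq_bot, Submodule.eq_bot_iff]
    intro q hq
    obtain ⟨v, rfl⟩ := Submodule.mkQ_surjective S q
    have hq' : Submodule.mkQ T (psiAdd n v) = 0 := hq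
    have hv : psiAdd n v ∈ T := (Submodule.Quotient.mk_eq_zero T).mp hq'
    obtain ⟨x, hx⟩ := hv
    have hvS : v ∈ S := by
      refine ⟨Sum.elim x (B.mulVec x - fun i => v (Sum.inr i)), ?_⟩
      rw [show Hm.mulVecLin = (Matrix.fromBlocks A (1 : Matrix (Fin n) (Fin n) ℤ) B 0 - 1).mulVecLin from rfl, hhat_mulVec]
      funext i
      cases i with
      | inl i =>
        have := congrFun hx i
        simp [psiAdd_apply, Matrix.mulVecLin_apply, Matrix.add_mulVec,
          Matrix.sub_mulVec, Matrix.one_mulVec] at this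
        simp [Sum.elim]
        linarith
      | inr i => simp [Sum.elim]
    exact (Submodule.Quotient.mk_eq_zero S).mpr hvS
  exact ⟨LinearEquiv.ofBijective f ⟨hfi, hfs⟩⟩
end

section
/- With A_κ the 6×6 matrix whose rows (in the ordered basis (1,1),(1,2),(1,3),(2,1),(2,2),(2,3)) are [1,0,0,1,0,0],[0,1,0,0,1,0],[0,0,1,0,0,1],[1,0,0,1,0,0],[0,1,0,0,1,0],[0,0,1,0,0,1] and B_κ the 6×6 matrix with rows [1,1,1,0,0,0] (three times) followed by [0,0,0,1,1,1] (three times), the quotient Z^6/(A_κ + B_κ - I)Z^6 is isomorphic to Z/8Z and the kernel of (A_κ + B_κ - I) on Z^6 is trivial. -/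
open Matrix

lemma finsucc3 : ((2 : Fin 5)).succ = (3 : Fin 6) := by decide
lemma finsucc4 : ((2 : Fin 4)).succ.succ = (4 : Fin 6) := by decide
lemma finsucc5 : ((2 : Fin 3)).succ.succ.succ = (5 : Fin 6) := by decide

def u6 : Fin 6 → ℤ := ![1,1,1,5,5,5]

def φ6 : (Fin 6 → ℤ) →ₗ[ℤ] ZMod 8 where
  toFun v := ((u6 ⬝ᵥ v : ℤ) : ZMod 8)
  map_add' x y := by simp [dotProduct_add]
  map_smul' m x := by
    have h : u6 ⬝ᵥ (m • x) = m * (u6 ⬝ᵥ x) := by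
      rw [dotProduct_smul, smul_eq_mul]
    show ((u6 ⬝ᵥ (m • x) : ℤ) : ZMod 8) = m • ((u6 ⬝ᵥ x : ℤ) : ZMod 8)
    rw [h, Int.cast_mul, zsmul_eq_mul]

/-- For the explicit 6×6 matrices `A_κ`, `B_κ` from the textile system of
`A=[2]`, `B=[3]` with the exchange specification, `ℤ^6/(A_κ+B_κ-I)ℤ^6 ≅ ℤ/8ℤ` and
`ker(A_κ+B_κ-I) = 0`. -/
theorem stmt_3
    (Aκ : Matrix (Fin 6) (Fin 6) ℤ)
    (Bκ : Matrix (Fin 6) (Fin 6) ℤ)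
    (hA : Aκ = !![1,0,0,1,0,0; 0,1,0,0,1,0; 0,0,1,0,0,1;
                  1,0,0,1,0,0; 0,1,0,0,1,0; 0,0,1,0,0,1])
    (hB : Bκ = !![1,1,1,0,0,0; 1,1,1,0,0,0; 1,1,1,0,0,0;
                  0,0,0,1,1,1; 0,0,0,1,1,1; 0,0,0,1,1,1]) :
    Nonempty
      (((Fin 6 → ℤ) ⧸ LinearMap.range (Matrix.mulVecLin (Aκ + Bκ - 1))) ≃ₗ[ℤ]
        ZMod 8) ∧
    LinearMap.ker (Matrix.mulVecLin (Aκ + Bκ - 1)) = ⊥ := by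
  subst hA hB
  rw [show (!![1,0,0,1,0,0; 0,1,0,0,1,0; 0,0,1,0,0,1;
                  1,0,0,1,0,0; 0,1,0,0,1,0; 0,0,1,0,0,1] +
            !![1,1,1,0,0,0; 1,1,1,0,0,0; 1,1,1,0,0,0;
                  0,0,0,1,1,1; 0,0,0,1,1,1; 0,0,0,1,1,1] - 1 : Matrix (Fin 6) (Fin 6) ℤ)
      = !![1,1,1,1,0,0; 1,1,1,0,1,0; 1,1,1,0,0,1;
           1,0,0,1,1,1; 0,1,0,1,1,1; 0,0,1,1,1,1] by
    ext i j
    fin_cases i <;> fin_cases j <;> decide]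
  set M : Matrix (Fin 6) (Fin 6) ℤ :=
    !![1,1,1,1,0,0; 1,1,1,0,1,0; 1,1,1,0,0,1;
       1,0,0,1,1,1; 0,1,0,1,1,1; 0,0,1,1,1,1] with hMdef
  constructor
  · -- cokernel ≅ ZMod 8
    have hsurj : Function.Surjective φ6 := by
      intro c
      refine ⟨![(c.val : ℤ),0,0,0,0,0], ?_⟩
      show ((u6 ⬝ᵥ ![(c.val : ℤ),0,0,0,0,0] : ℤ) : ZMod 8) = c
      have h : (u6 ⬝ᵥ ![(c.val : ℤ),0,0,0,0,0] : ℤ) = (c.val : ℤ) := by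
        simp [u6, dotProduct, Fin.sum_univ_succ]
      rw [h]
      push_cast
      simp [ZMod.natCast_val, ZMod.cast_id]
    have hEq : LinearMap.range (Matrix.mulVecLin M) = LinearMap.ker φ6 := by
      apply le_antisymm
      · rintro v ⟨w, rfl⟩
        show ((u6 ⬝ᵥ (M.mulVecLin w) : ℤ) : ZMod 8) = 0
        have h : (u6 ⬝ᵥ (M.mulVecLin w) : ℤ)
            = 8 * (w 0 + w 1 + w 2 + 2*w 3 + 2*w 4 + 2*w 5) := by
          show (u6 ⬝ᵥ (fun i =>
              (![![1,1,1,1,0,0], ![1,1,1,0,1,0], ![1,1,1,0,0,1],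
                 ![1,0,0,1,1,1], ![0,1,0,1,1,1], ![0,0,1,1,1,1]] i : Fin 6 → ℤ) ⬝ᵥ w) : ℤ)
            = 8 * (w 0 + w 1 + w 2 + 2*w 3 + 2*w 4 + 2*w 5)
          simp [u6, dotProduct, Fin.sum_univ_succ, finsucc3, finsucc4, finsucc5]
          ring
        rw [h]
        push_cast
        have h8 : ((8 : ZMod 8)) = 0 := by decide
        rw [h8, zero_mul]
      · intro v hv
        have hv' : ((u6 ⬝ᵥ v : ℤ) : ZMod 8) = 0 := hv
        rw [ZMod.intCast_zmod_eq_zero_iff_dvd] at hv'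
        obtain ⟨k, hk⟩ := hv'
        have hk' : v 0 + v 1 + v 2 + 5*v 3 + 5*v 4 + 5*v 5 = 8 * k := by
          have h : (u6 ⬝ᵥ v : ℤ) = v 0 + v 1 + v 2 + 5*v 3 + 5*v 4 + 5*v 5 := by
            simp [u6, dotProduct, Fin.sum_univ_succ, finsucc3, finsucc4, finsucc5]
            ring
          rw [h] at hk; push_cast at hk; linarith
        set w : Fin 6 → ℤ :=
          ![k - v 4 - v 5, k - v 3 - v 5, k - v 3 - v 4,
            5*k - v 1 - v 2 - 3*v 3 - 3*v 4 - 3*v 5,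
            5*k - v 0 - v 2 - 3*v 3 - 3*v 4 - 3*v 5,
            5*k - v 0 - v 1 - 3*v 3 - 3*v 4 - 3*v 5] with hw
        refine ⟨w, ?_⟩
        have e0 : M.mulVecLin w 0 = v 0 := by
          show (![1,1,1,1,0,0] : Fin 6 → ℤ) ⬝ᵥ w = v 0
          simp [hw, dotProduct, Fin.sum_univ_succ, finsucc3, finsucc4, finsucc5]
          linarith
        have e1 : M.mulVecLin w 1 = v 1 := by
          show (![1,1,1,0,1,0] : Fin 6 → ℤ) ⬝ᵥ w = v 1
          simp [hw, dotProduct, Fin.sum_univ_succ, finsucc3, finsucc4, finsucc5]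
          linarith
        have e2 : M.mulVecLin w 2 = v 2 := by
          show (![1,1,1,0,0,1] : Fin 6 → ℤ) ⬝ᵥ w = v 2
          simp [hw, dotProduct, Fin.sum_univ_succ, finsucc3, finsucc4, finsucc5]
          linarith
        have e3 : M.mulVecLin w 3 = v 3 := by
          show (![1,0,0,1,1,1] : Fin 6 → ℤ) ⬝ᵥ w = v 3
          simp [hw, dotProduct, Fin.sum_univ_succ, finsucc3, finsucc4, finsucc5]
          linarith
        have e4 : M.mulVecLin w 4 = v 4 := by
          show (![0,1,0,1,1,1] : Fin 6 → ℤ) ⬝ᵥ w = v 4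
          simp [hw, dotProduct, Fin.sum_univ_succ, finsucc3, finsucc4, finsucc5]
          linarith
        have e5 : M.mulVecLin w 5 = v 5 := by
          show (![0,0,1,1,1,1] : Fin 6 → ℤ) ⬝ᵥ w = v 5
          simp [hw, dotProduct, Fin.sum_univ_succ, finsucc3, finsucc4, finsucc5]
          linarith
        funext i
        fin_cases i
        · exact e0
        · exact e1
        · exact e2
        · exact e3
        · exact e4
        · exact e5
    exact ⟨(Submodule.quotEquivOfEq _ _ hEq).trans
      (φ6.quotKerEquivOfSurjective hsurj)⟩
  · -- kernel trivial
    rw [LinearMap.ker_eq_bot']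
    intro v hv
    have h0 : (![1,1,1,1,0,0] : Fin 6 → ℤ) ⬝ᵥ v = 0 := congrFun hv 0
    have h1 : (![1,1,1,0,1,0] : Fin 6 → ℤ) ⬝ᵥ v = 0 := congrFun hv 1
    have h2 : (![1,1,1,0,0,1] : Fin 6 → ℤ) ⬝ᵥ v = 0 := congrFun hv 2
    have h3 : (![1,0,0,1,1,1] : Fin 6 → ℤ) ⬝ᵥ v = 0 := congrFun hv 3
    have h4 : (![0,1,0,1,1,1] : Fin 6 → ℤ) ⬝ᵥ v = 0 := congrFun hv 4
    have h5 : (![0,0,1,1,1,1] : Fin 6 → ℤ) ⬝ᵥ v = 0 := congrFun hv 5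
    simp [dotProduct, Fin.sum_univ_succ, finsucc3, finsucc4, finsucc5]
      at h0 h1 h2 h3 h4 h5
    have e0 : v 0 = 0 := by omega
    have e1 : v 1 = 0 := by omega
    have e2 : v 2 = 0 := by omega
    have e3 : v 3 = 0 := by omega
    have e4 : v 4 = 0 := by omega
    have e5 : v 5 = 0 := by omega
    funext i
    fin_cases i
    · exact e0
    · exact e1
    · exact e2
    · exact e3
    · exact e4
    · exact e5
end

section
/- In a unital C*-algebra suppose elements Φ(x) for x in a commutative unital C*-algebra A, and partial isometries U, V satisfy: U U* + V V* = 1 (in the two-symbol case), U U* Φ(x) = Φ(x) U U*, V V* Φ(x) = Φ(x) V V*, U* Φ(x) U = Φ(ρ(x)), V* Φ(x) V = Φ(η(x)) for *-endomorphisms ρ, η of A with η∘ρ = ρ∘η. Then the partial isometry C := V U V* U* satisfies C Φ(x) = Φ(x) C for all x ∈ A, C U V = V U, and C* V U = U V, and C C* = V U U* V*, C* C = U V V* U*. -/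
/-- In the one-symbol case of the relations (5.8)–(5.10), with commuting
unital `*`-endomorphisms `ρ`, `η` of a commutative unital C*-algebra `A` and a unital
`*`-homomorphism `Φ : A → D`, the partial isometry `C = V U V* U*` commutes with every
`Φ(x)`, satisfies `C U V = V U`, `C* V U = U V`, `C C* = V U U* V*` and
`C* C = U V V* U*`. -/
theorem stmt_13 {A D : Type*}
    [NormedRing A] [StarRing A] [CStarRing A] [NormedAlgebra ℂ A] [StarModule ℂ A]
    [NormedRing D] [StarRing D] [CStarRing D] [NormedAlgebra ℂ D] [StarModule ℂ D]
    (hAcomm : ∀ x y : A, x * y = y * x)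
    (ρ η : A →⋆ₐ[ℂ] A) (hρη : ∀ x, η (ρ x) = ρ (η x))
    (Φ : A →⋆ₐ[ℂ] D) (U V : D)
    (h1 : U * star U + V * star V = 1)
    (h2 : ∀ x, U * star U * Φ x = Φ x * (U * star U))
    (h3 : ∀ x, V * star V * Φ x = Φ x * (V * star V))
    (h4 : ∀ x, star U * Φ x * U = Φ (ρ x))
    (h5 : ∀ x, star V * Φ x * V = Φ (η x)) :
    (V * U * star V * star U) * star (V * U * star V * star U) *
        (V * U * star V * star U) = V * U * star V * star U ∧
    (∀ x : A, (V * U * star V * star U) * Φ x = Φ x * (V * U * star V * star U)) ∧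
    (V * U * star V * star U) * (U * V) = V * U ∧
    star (V * U * star V * star U) * (V * U) = U * V ∧
    (V * U * star V * star U) * star (V * U * star V * star U) =
      V * U * star U * star V ∧
    star (V * U * star V * star U) * (V * U * star V * star U) =
      U * V * star V * star U := by
  have hU1 : star U * U = 1 := by
    have := h4 1; simpa using this
  have hV1 : star V * V = 1 := by
    have := h5 1; simpa using this
  have hU1' : ∀ w : D, star U * (U * w) = w := by
    intro w; rw [← mul_assoc, hU1, one_mul]
  have hV1' : ∀ w : D, star V * (V * w) = w := by
    intro w; rw [← mul_assoc, hV1, one_mul]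
  -- Φ x * U = U * Φ (ρ x)
  have hΦU : ∀ x, Φ x * U = U * Φ (ρ x) := by
    intro x
    calc Φ x * U = Φ x * (U * star U) * U := by
          rw [mul_assoc (Φ x), mul_assoc U, hU1, mul_one]
      _ = U * star U * Φ x * U := by rw [← h2]
      _ = U * (star U * Φ x * U) := by rw [mul_assoc, mul_assoc, mul_assoc]
      _ = U * Φ (ρ x) := by rw [h4]
  have hΦV : ∀ x, Φ x * V = V * Φ (η x) := by
    intro x
    calc Φ x * V = Φ x * (V * star V) * V := by
          rw [mul_assoc (Φ x), mul_assoc V, hV1, mul_one]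
      _ = V * star V * Φ x * V := by rw [← h3]
      _ = V * (star V * Φ x * V) := by rw [mul_assoc, mul_assoc, mul_assoc]
      _ = V * Φ (η x) := by rw [h5]
  have hUΦ : ∀ x, star U * Φ x = Φ (ρ x) * star U := by
    intro x
    calc star U * Φ x = star U * (U * star U * Φ x) := by
          rw [mul_assoc U, ← mul_assoc (star U), hU1, one_mul]
      _ = star U * (Φ x * (U * star U)) := by rw [h2]
      _ = star U * Φ x * U * star U := by
          rw [mul_assoc, mul_assoc, ← mul_assoc (Φ x)]
      _ = Φ (ρ x) * star U := by rw [h4]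
  have hVΦ : ∀ x, star V * Φ x = Φ (η x) * star V := by
    intro x
    calc star V * Φ x = star V * (V * star V * Φ x) := by
          rw [mul_assoc V, ← mul_assoc (star V), hV1, one_mul]
      _ = star V * (Φ x * (V * star V)) := by rw [h3]
      _ = star V * Φ x * V * star V := by
          rw [mul_assoc, mul_assoc, ← mul_assoc (Φ x)]
      _ = Φ (η x) * star V := by rw [h5]
  -- w-versions for rewriting inside right-associated products
  have hUΦ' : ∀ (x) (w : D), star U * (Φ x * w) = Φ (ρ x) * (star U * w) := by
    intro x w; rw [← mul_assoc, hUΦ, mul_assoc]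
  have hVΦ' : ∀ (x) (w : D), star V * (Φ x * w) = Φ (η x) * (star V * w) := by
    intro x w; rw [← mul_assoc, hVΦ, mul_assoc]
  have hΦU' : ∀ (x) (w : D), Φ x * (U * w) = U * (Φ (ρ x) * w) := by
    intro x w; rw [← mul_assoc, hΦU, mul_assoc]
  have hΦV' : ∀ (x) (w : D), Φ x * (V * w) = V * (Φ (η x) * w) := by
    intro x w; rw [← mul_assoc, hΦV, mul_assoc]
  refine ⟨?_, ?_, ?_, ?_, ?_, ?_⟩
  · simp only [star_mul, star_star, mul_assoc, hU1', hV1', hU1, hV1, mul_one]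
  · intro x
    calc V * U * star V * star U * Φ x
        = V * (U * (star V * (star U * Φ x))) := by simp only [mul_assoc]
      _ = V * (U * (Φ (η (ρ x)) * (star V * star U))) := by
          rw [hUΦ, hVΦ']
      _ = V * (U * (Φ (ρ (η x)) * (star V * star U))) := by rw [hρη]
      _ = Φ x * (V * U * star V * star U) := by
          rw [← hΦU', ← hΦV']; simp only [mul_assoc]
  · simp only [mul_assoc, hU1', hV1', hU1, hV1, mul_one]
  · simp only [star_mul, star_star, mul_assoc, hU1', hV1', hU1, hV1, mul_one]
  · simp only [star_mul, star_star, mul_assoc, hU1', hV1', hU1, hV1, mul_one]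
  · simp only [star_mul, star_star, mul_assoc, hU1', hV1', hU1, hV1, mul_one]
end
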